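/- Completeness of JD4_CS: for every axiomatically appropriate constant specification CS for JD4 and every formula A, if A is not derivable in the Hilbert system JD4_CS then there exists a Fitting model M for JD4_CS and a world w in M such that M,w ⊮ A. -/
import Mathlib


namespace JustificationLogic

/-- Justification terms: constants, variables, application, sum, and proof checker `!`. -/
inductive Term : Type
  | const : ℕ → Term
  | var : ℕ → Term
  | app : Term → Term → Term
  | sum : Term → Term → Term
  | bang : Term → Term
  deriving DecidableEq

/-- Formulas of justification logic: atoms, negation, implication, and `t : A`. -/
inductive Formula : Type
  | atom : ℕ → Formula
  | neg : Formula → Formula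
  | impl : Formula → Formula → Formula
  | just : Term → Formula → Formula
  deriving DecidableEq

/-- Disjunction, defined classically: `A ∨ B := ¬A → B`. -/
def Formula.or (A B : Formula) : Formula := (Formula.neg A).impl B

/-- Falsum, defined as the negation of a propositional tautology. -/
def Formula.falsum : Formula := Formula.neg ((Formula.atom 0).impl (Formula.atom 0))

/-- Number of symbols of a term. -/
def Term.size : Term → ℕ
  | .const _ => 1
  | .var _ => 1
  | .app s t => s.size + t.size + 1
  | .sum s t => s.size + t.size + 1
  | .bang t => t.size + 1

/-- Number of symbols of a formula. -/
def Formula.size : Formula → ℕ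
  | .atom _ => 1
  | .neg A => A.size + 1
  | .impl A B => A.size + B.size + 1
  | .just t A => t.size + A.size + 1

/-- An explicit numerical code for terms (an injective Gödel numbering). -/
def Term.code : Term → ℕ
  | .const n => Nat.pair 0 n
  | .var n => Nat.pair 1 n
  | .app s t => Nat.pair 2 (Nat.pair s.code t.code)
  | .sum s t => Nat.pair 3 (Nat.pair s.code t.code)
  | .bang t => Nat.pair 4 t.code

/-- An explicit numerical code for formulas (an injective Gödel numbering). -/
def Formula.code : Formula → ℕ
  | .atom n => Nat.pair 0 n
  | .neg A => Nat.pair 1 A.code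
  | .impl A B => Nat.pair 2 (Nat.pair A.code B.code)
  | .just t A => Nat.pair 3 (Nat.pair t.code A.code)

/-- Substitution of terms for term variables. -/
def Term.subst (σ : ℕ → Term) : Term → Term
  | .const n => .const n
  | .var n => σ n
  | .app s t => .app (s.subst σ) (t.subst σ)
  | .sum s t => .sum (s.subst σ) (t.subst σ)
  | .bang t => .bang (t.subst σ)

/-- Simultaneous substitution of terms for term variables and formulas for atoms. -/
def Formula.subst (σ : ℕ → Term) (τ : ℕ → Formula) : Formula → Formula
  | .atom n => τ n
  | .neg A => .neg (A.subst σ τ)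
  | .impl A B => .impl (A.subst σ τ) (B.subst σ τ)
  | .just t A => .just (t.subst σ) (A.subst σ τ)

/-- `towerT c n = !ⁿc`. -/
def towerT (c : Term) : ℕ → Term
  | 0 => c
  | n + 1 => Term.bang (towerT c n)

/-- `towerF c A n = !ⁿ⁻¹c : ⋯ : !c : c : A` (and `A` for `n = 0`), so that
`(towerT c n) : (towerF c A n)` is the `n`-th formula produced by the rule (AN!). -/
def towerF (c : Term) (A : Formula) : ℕ → Formula
  | 0 => A
  | n + 1 => Formula.just (towerT c n) (towerF c A n)

/-- The axioms of the justification logics considered, with switches `hd`, `ht`, `h4`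
for the axioms (jd), (jt), (j4).  The propositional part (A1) is given by three
standard Hilbert-style schemes axiomatizing classical propositional logic. -/
inductive Ax (hd ht h4 : Bool) : Formula → Prop
  | k (A B : Formula) : Ax hd ht h4 (A.impl (B.impl A))
  | s (A B C : Formula) :
      Ax hd ht h4 ((A.impl (B.impl C)).impl ((A.impl B).impl (A.impl C)))
  | dn (A B : Formula) :
      Ax hd ht h4 (((A.neg).impl (B.neg)).impl (B.impl A))
  | a2 (t s : Term) (A B : Formula) :
      Ax hd ht h4 ((Formula.just t (A.impl B)).impl
        ((Formula.just s A).impl (Formula.just (Term.app t s) B)))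
  | a3 (t s : Term) (A : Formula) :
      Ax hd ht h4 (((Formula.just t A).or (Formula.just s A)).impl
        (Formula.just (Term.sum t s) A))
  | jd (t : Term) : hd = true →
      Ax hd ht h4 ((Formula.just t Formula.falsum).impl Formula.falsum)
  | jt (t : Term) (A : Formula) : ht = true →
      Ax hd ht h4 ((Formula.just t A).impl A)
  | j4 (t : Term) (A : Formula) : h4 = true →
      Ax hd ht h4 ((Formula.just t A).impl
        (Formula.just (Term.bang t) (Formula.just t A)))

/-- Axioms of the respective logics. -/
def AxJ : Formula → Prop := Ax false false false
def AxJT : Formula → Prop := Ax false true false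
def AxJD : Formula → Prop := Ax true false false
def AxJ4 : Formula → Prop := Ax false false true
def AxJD4 : Formula → Prop := Ax true false true
def AxLP : Formula → Prop := Ax false true true

/-- `CS` is a constant specification for the logic with axioms `Axm`:
every member of `CS` is of the form `c : A` with `c` a constant and `A` an axiom. -/
def ConstSpec (Axm : Formula → Prop) (CS : Set Formula) : Prop :=
  ∀ F ∈ CS, ∃ (c : ℕ) (A : Formula), F = Formula.just (Term.const c) A ∧ Axm A

/-- `CS` is axiomatically appropriate for axioms `Axm`:
for every axiom `A` there is a constant `c` with `c : A ∈ CS`. -/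
def AxApprop (Axm : Formula → Prop) (CS : Set Formula) : Prop :=
  ∀ A : Formula, Axm A → ∃ c : ℕ, Formula.just (Term.const c) A ∈ CS

/-- `CS` is schematic: the set of axioms justified by a given constant consists of
axiom schemes, i.e. it is closed under simultaneous substitution of terms for term
variables and formulas for atomic propositions. -/
def Schematic (CS : Set Formula) : Prop :=
  ∀ (c : ℕ) (A : Formula), Formula.just (Term.const c) A ∈ CS →
    ∀ (σ : ℕ → Term) (τ : ℕ → Formula),
      Formula.just (Term.const c) (A.subst σ τ) ∈ CS

/-- `CS` is decidable: some computable function decides membership in `CS`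
(via the explicit Gödel numbering of formulas). -/
def DecidableCS (CS : Set Formula) : Prop :=
  ∃ C : ℕ → Bool, Computable C ∧ ∀ F : Formula, F ∈ CS ↔ C F.code = true

/-- Hilbert-style derivability with the iterated axiom necessitation rule (AN!):
from `c : A ∈ CS` infer `!ⁿc : !ⁿ⁻¹c : ⋯ : !c : c : A` for every `n ≥ 0`. -/
inductive DerivB (Axm : Formula → Prop) (CS : Set Formula) : Formula → Prop
  | ax {A : Formula} : Axm A → DerivB Axm CS A
  | mp {A B : Formula} : DerivB Axm CS (A.impl B) → DerivB Axm CS A → DerivB Axm CS B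
  | an (c : ℕ) (A : Formula) (n : ℕ) :
      Formula.just (Term.const c) A ∈ CS →
      DerivB Axm CS (Formula.just (towerT (Term.const c) n) (towerF (Term.const c) A n))

/-- Hilbert-style derivability with the simple axiom necessitation rule (AN):
from `c : A ∈ CS` infer `c : A`. -/
inductive DerivS (Axm : Formula → Prop) (CS : Set Formula) : Formula → Prop
  | ax {A : Formula} : Axm A → DerivS Axm CS A
  | mp {A B : Formula} : DerivS Axm CS (A.impl B) → DerivS Axm CS A → DerivS Axm CS B
  | an (c : ℕ) (A : Formula) :
      Formula.just (Term.const c) A ∈ CS →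
      DerivS Axm CS (Formula.just (Term.const c) A)

/-- A structure for Fitting models: a nonempty set of worlds, an accessibility
relation, an evidence relation and a valuation. -/
structure Model : Type 1 where
  World : Type
  nonempty : Nonempty World
  R : World → World → Prop
  E : Term → Formula → World → Prop
  val : ℕ → World → Prop

/-- The satisfaction relation `M, w ⊩ A`. -/
def Sat (M : Model) : Formula → M.World → Prop
  | .atom n, w => M.val n w
  | .neg A, w => ¬ Sat M A w
  | .impl A B, w => Sat M A w → Sat M B w
  | .just t A, w => M.E t A w ∧ ∀ v : M.World, M.R w v → Sat M A v

/-- The evidence relation of a model, as a set of triples. -/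
def EvSet (M : Model) : Set (Term × Formula × M.World) :=
  {x | M.E x.1 x.2.1 x.2.2}

/-- The graph of the valuation: the set `{(w, p) | w ∈ ν(p)}`. -/
def ValSet (M : Model) : Set (M.World × ℕ) :=
  {p | M.val p.2 p.1}

/-- Seriality of a relation: every world has a successor. -/
def Serial {W : Type} (R : W → W → Prop) : Prop := ∀ w : W, ∃ v : W, R w v

/-- Admissible evidence relation for the logics without the (j4) axiom:
closure under sum and application, and the constant specification condition
with iterated `!`. -/
def AdmissibleBang (CS : Set Formula) {W : Type}
    (E : Set (Term × Formula × W)) : Prop :=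
  (∀ (s t : Term) (A : Formula) (w : W),
      ((s, A, w) ∈ E ∨ (t, A, w) ∈ E) → (Term.sum s t, A, w) ∈ E) ∧
  (∀ (s t : Term) (A B : Formula) (w : W),
      (s, A.impl B, w) ∈ E → (t, A, w) ∈ E → (Term.app s t, B, w) ∈ E) ∧
  (∀ (c : ℕ) (A : Formula) (w : W) (n : ℕ),
      Formula.just (Term.const c) A ∈ CS →
      (towerT (Term.const c) n, towerF (Term.const c) A n, w) ∈ E)

/-- Admissible evidence relation for the logics with the (j4) axiom:
closure under sum and application, the simple constant specification condition,
closure under `!`, and monotonicity along the accessibility relation. -/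
def AdmissibleJ4 (CS : Set Formula) {W : Type} (R : W → W → Prop)
    (E : Set (Term × Formula × W)) : Prop :=
  (∀ (s t : Term) (A : Formula) (w : W),
      ((s, A, w) ∈ E ∨ (t, A, w) ∈ E) → (Term.sum s t, A, w) ∈ E) ∧
  (∀ (s t : Term) (A B : Formula) (w : W),
      (s, A.impl B, w) ∈ E → (t, A, w) ∈ E → (Term.app s t, B, w) ∈ E) ∧
  (∀ (c : ℕ) (A : Formula) (w : W),
      Formula.just (Term.const c) A ∈ CS → (Term.const c, A, w) ∈ E) ∧
  (∀ (t : Term) (A : Formula) (w : W),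
      (t, A, w) ∈ E → (Term.bang t, Formula.just t A, w) ∈ E) ∧
  (∀ (t : Term) (A : Formula) (w v : W),
      (t, A, w) ∈ E → R w v → (t, A, v) ∈ E)

/-- `M` is a Fitting model for `J_CS`. -/
def IsModelJ (CS : Set Formula) (M : Model) : Prop :=
  AdmissibleBang CS (EvSet M)

/-- `M` is a Fitting model for `JT_CS`: additionally `R` is reflexive. -/
def IsModelJT (CS : Set Formula) (M : Model) : Prop :=
  Reflexive M.R ∧ AdmissibleBang CS (EvSet M)

/-- `M` is a Fitting model for `JD_CS`: additionally `R` is serial. -/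
def IsModelJD (CS : Set Formula) (M : Model) : Prop :=
  Serial M.R ∧ AdmissibleBang CS (EvSet M)

/-- `M` is a Fitting model for `J4_CS`: `R` is transitive. -/
def IsModelJ4 (CS : Set Formula) (M : Model) : Prop :=
  Transitive M.R ∧ AdmissibleJ4 CS M.R (EvSet M)

/-- `M` is a Fitting model for `JD4_CS`: `R` is serial and transitive. -/
def IsModelJD4 (CS : Set Formula) (M : Model) : Prop :=
  Serial M.R ∧ Transitive M.R ∧ AdmissibleJ4 CS M.R (EvSet M)

/-- `M` is a Fitting model for `LP_CS`: `R` is reflexive and transitive. -/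
def IsModelLP (CS : Set Formula) (M : Model) : Prop :=
  Reflexive M.R ∧ Transitive M.R ∧ AdmissibleJ4 CS M.R (EvSet M)

/-- `B` is a base for the evidence relation of `M`, and that evidence relation is
minimal (least) among the admissible ones (non-(j4) version) containing `B`. -/
def MinBaseBang (CS : Set Formula) (M : Model)
    (B : Set (Term × Formula × M.World)) : Prop :=
  B ⊆ EvSet M ∧
  ∀ E' : Set (Term × Formula × M.World),
    AdmissibleBang CS E' → B ⊆ E' → EvSet M ⊆ E'

/-- `B` is a base for the evidence relation of `M`, and that evidence relation is
minimal (least) among the admissible ones ((j4) version) containing `B`. -/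
def MinBaseJ4 (CS : Set Formula) (M : Model)
    (B : Set (Term × Formula × M.World)) : Prop :=
  B ⊆ EvSet M ∧
  ∀ E' : Set (Term × Formula × M.World),
    AdmissibleJ4 CS M.R E' → B ⊆ E' → EvSet M ⊆ E'

/-- `M` is finitary (non-(j4) version): finitely many worlds, the evidence relation
is the minimal admissible one over some finite base, and the valuation has finite graph. -/
def FinitaryBang (CS : Set Formula) (M : Model) : Prop :=
  Finite M.World ∧
  (∃ B : Set (Term × Formula × M.World), B.Finite ∧ MinBaseBang CS M B) ∧
  (ValSet M).Finite

/-- `M` is finitary ((j4) version): finitely many worlds, the evidence relation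
is the minimal admissible one over some finite base, and the valuation has finite graph. -/
def FinitaryJ4 (CS : Set Formula) (M : Model) : Prop :=
  Finite M.World ∧
  (∃ B : Set (Term × Formula × M.World), B.Finite ∧ MinBaseJ4 CS M B) ∧
  (ValSet M).Finite

/-! ### Auxiliary development for completeness of JD4 -/

/-- Derivability from a set of premises. -/
inductive DerivC (CS : Set Formula) (Γ : Set Formula) : Formula → Prop
  | ax {A : Formula} : AxJD4 A → DerivC CS Γ A
  | prem {A : Formula} : A ∈ Γ → DerivC CS Γ A
  | mp {A B : Formula} : DerivC CS Γ (A.impl B) → DerivC CS Γ A → DerivC CS Γ B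
  | an (c : ℕ) (A : Formula) : Formula.just (Term.const c) A ∈ CS →
      DerivC CS Γ (Formula.just (Term.const c) A)

section CompletenessAux

variable {CS : Set Formula}

theorem DerivC.mono {Γ Γ' : Set Formula} {F : Formula}
    (h : DerivC CS Γ F) (hs : Γ ⊆ Γ') : DerivC CS Γ' F := by
  induction h with
  | ax h => exact .ax h
  | prem h => exact .prem (hs h)
  | mp _ _ ih1 ih2 => exact .mp ih1 ih2
  | an c A h => exact .an c A h

theorem DerivC.toS {F : Formula} (h : DerivC CS ∅ F) : DerivS AxJD4 CS F := by
  induction h with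
  | ax h => exact .ax h
  | prem h => exact absurd h (Set.notMem_empty _)
  | mp _ _ ih1 ih2 => exact .mp ih1 ih2
  | an c A h => exact .an c A h

theorem taut_id {Γ : Set Formula} (A : Formula) : DerivC CS Γ (A.impl A) :=
  .mp (.mp (.ax (Ax.s A (A.impl A) A)) (.ax (Ax.k A (A.impl A)))) (.ax (Ax.k A A))

theorem deduction {Γ : Set Formula} {A B : Formula}
    (h : DerivC CS (insert A Γ) B) : DerivC CS Γ (A.impl B) := by
  induction h with
  | ax h => exact .mp (.ax (Ax.k _ _)) (.ax h)
  | @prem B h =>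
      rcases Set.mem_insert_iff.mp h with h | h
      · rw [h]; exact taut_id A
      · exact .mp (.ax (Ax.k _ _)) (.prem h)
  | mp _ _ ih1 ih2 => exact .mp (.mp (.ax (Ax.s _ _ _)) ih1) ih2
  | an c A h => exact .mp (.ax (Ax.k _ _)) (.an c A h)

/-- Hypothetical syllogism. -/
theorem syl {Γ : Set Formula} {A B C : Formula}
    (hab : DerivC CS Γ (A.impl B)) (hbc : DerivC CS Γ (B.impl C)) :
    DerivC CS Γ (A.impl C) :=
  .mp (.mp (.ax (Ax.s A B C)) (.mp (.ax (Ax.k (B.impl C) A)) hbc)) hab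

/-- Double negation elimination. -/
theorem dne {Γ : Set Formula} (A : Formula) :
    DerivC CS Γ ((A.neg.neg).impl A) := by
  apply deduction
  have h1 : DerivC CS (insert A.neg.neg Γ) A.neg.neg := .prem (Set.mem_insert _ _)
  have h2 : DerivC CS (insert A.neg.neg Γ) (A.neg.neg.neg.neg.impl A.neg.neg) :=
    .mp (.ax (Ax.k A.neg.neg A.neg.neg.neg.neg)) h1
  have h3 : DerivC CS (insert A.neg.neg Γ) (A.neg.impl A.neg.neg.neg) :=
    .mp (.ax (Ax.dn A.neg.neg.neg A.neg)) h2
  have h4 : DerivC CS (insert A.neg.neg Γ) (A.neg.neg.impl A) :=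
    .mp (.ax (Ax.dn A A.neg.neg)) h3
  exact .mp h4 h1

/-- `¬A → (A → B)`. -/
theorem neg_elim {Γ : Set Formula} (A B : Formula) :
    DerivC CS Γ (A.neg.impl (A.impl B)) := by
  apply deduction
  have h1 : DerivC CS (insert A.neg Γ) A.neg := .prem (Set.mem_insert _ _)
  have h2 : DerivC CS (insert A.neg Γ) (B.neg.impl A.neg) :=
    .mp (.ax (Ax.k A.neg B.neg)) h1
  exact .mp (.ax (Ax.dn B A)) h2

theorem neg_intro {Γ : Set Formula} {A : Formula}
    (h : DerivC CS Γ (A.impl Formula.falsum)) : DerivC CS Γ A.neg := by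
  have h1 : DerivC CS Γ (A.neg.neg.impl Formula.falsum) := syl (dne A) h
  have h2 : DerivC CS Γ
      ((((Formula.atom 0).impl (Formula.atom 0))).impl A.neg) :=
    .mp (.ax (Ax.dn A.neg ((Formula.atom 0).impl (Formula.atom 0)))) h1
  exact .mp h2 (taut_id _)

theorem or_intro_left {Γ : Set Formula} {A : Formula} (B : Formula)
    (h : DerivC CS Γ A) : DerivC CS Γ (A.or B) := by
  have h1 : DerivC CS Γ (A.neg.impl (A.impl B)) := neg_elim A B
  have h2 : DerivC CS Γ (A.neg.impl A) := .mp (.ax (Ax.k A A.neg)) h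
  exact .mp (.mp (.ax (Ax.s A.neg A B)) h1) h2

theorem or_intro_right {Γ : Set Formula} (A : Formula) {B : Formula}
    (h : DerivC CS Γ B) : DerivC CS Γ (A.or B) :=
  .mp (.ax (Ax.k B A.neg)) h

/-- Internalization (lifting) lemma. -/
theorem lift (hApp : AxApprop AxJD4 CS) {Γ Δ : Set Formula} {F : Formula}
    (h : DerivC CS Γ F)
    (hb : ∀ B ∈ Γ, ∃ t : Term, DerivC CS Δ (Formula.just t B)) :
    ∃ t : Term, DerivC CS Δ (Formula.just t F) := by
  induction h with
  | ax h =>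
      obtain ⟨c, hc⟩ := hApp _ h
      exact ⟨Term.const c, .an c _ hc⟩
  | prem h => exact hb _ h
  | @mp A B _ _ ih1 ih2 =>
      obtain ⟨u, hu⟩ := ih1
      obtain ⟨v, hv⟩ := ih2
      exact ⟨Term.app u v, .mp (.mp (.ax (Ax.a2 u v A B)) hu) hv⟩
  | an c A h =>
      exact ⟨Term.bang (Term.const c),
        .mp (.ax (Ax.j4 (Term.const c) A rfl)) (.an c A h)⟩

/-- Only finitely many premises are used in a derivation. -/
theorem DerivC.finite {Γ : Set Formula} {F : Formula} (h : DerivC CS Γ F) :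
    ∃ Γ' : Set Formula, Γ'.Finite ∧ Γ' ⊆ Γ ∧ DerivC CS Γ' F := by
  induction h with
  | @ax A h => exact ⟨∅, Set.finite_empty, Set.empty_subset _, .ax h⟩
  | @prem A h =>
      exact ⟨{A}, Set.finite_singleton _, Set.singleton_subset_iff.mpr h, .prem rfl⟩
  | mp _ _ ih1 ih2 =>
      obtain ⟨Γ1, hf1, hs1, hd1⟩ := ih1
      obtain ⟨Γ2, hf2, hs2, hd2⟩ := ih2
      exact ⟨Γ1 ∪ Γ2, hf1.union hf2, Set.union_subset hs1 hs2,
        .mp (hd1.mono Set.subset_union_left) (hd2.mono Set.subset_union_right)⟩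
  | an c A h => exact ⟨∅, Set.finite_empty, Set.empty_subset _, .an c A h⟩

end CompletenessAux

def Consistent (CS Γ : Set Formula) : Prop := ¬ DerivC CS Γ Formula.falsum

/-- Maximal consistent sets. -/
def MCS (CS w : Set Formula) : Prop :=
  Consistent CS w ∧ ∀ F : Formula, F ∉ w → ¬ Consistent CS (insert F w)

section CompletenessAux2

variable {CS : Set Formula}

theorem MCS.mem_of_deriv {w : Set Formula} (hw : MCS CS w) {F : Formula}
    (h : DerivC CS w F) : F ∈ w := by
  by_contra hF
  have h1 : DerivC CS (insert F w) Formula.falsum := not_not.mp (hw.2 F hF)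
  exact hw.1 (.mp (deduction h1) h)

theorem MCS.neg_mem_iff {w : Set Formula} (hw : MCS CS w) {A : Formula} :
    A.neg ∈ w ↔ A ∉ w := by
  constructor
  · intro hn hA
    exact hw.1 (.mp (.mp (neg_elim A Formula.falsum) (.prem hn)) (.prem hA))
  · intro hA
    have h1 : DerivC CS (insert A w) Formula.falsum := not_not.mp (hw.2 A hA)
    exact hw.mem_of_deriv (neg_intro (deduction h1))

theorem chain_bound {c : Set (Set Formula)} (hc : IsChain (· ⊆ ·) c)
    (hne : c.Nonempty) {S : Set Formula} (hS : S.Finite) (hsub : S ⊆ ⋃₀ c) :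
    ∃ m ∈ c, S ⊆ m := by
  classical
  obtain ⟨s, rfl⟩ := hS.exists_finset_coe
  clear hS
  revert hsub
  induction s using Finset.induction_on with
  | empty => exact fun _ => ⟨hne.choose, hne.choose_spec, by simp⟩
  | @insert a s ha ih =>
      intro hsub
      have hsub' : (↑s : Set Formula) ⊆ ⋃₀ c := by
        intro x hx
        exact hsub (by simp [hx])
      obtain ⟨m1, hm1, hm1s⟩ := ih hsub'
      have haU : a ∈ ⋃₀ c := hsub (by simp)
      obtain ⟨m2, hm2, ham2⟩ := haU
      rcases hc.total hm1 hm2 with hle | hle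
      · refine ⟨m2, hm2, ?_⟩
        intro x hx
        rcases (by simpa using hx : x = a ∨ x ∈ s) with rfl | hx
        · exact ham2
        · exact hle (hm1s hx)
      · refine ⟨m1, hm1, ?_⟩
        intro x hx
        rcases (by simpa using hx : x = a ∨ x ∈ s) with rfl | hx
        · exact hle ham2
        · exact hm1s hx

theorem lindenbaum {Γ : Set Formula} (h : Consistent CS Γ) :
    ∃ w : Set Formula, Γ ⊆ w ∧ MCS CS w := by
  have H : ∀ c ⊆ {Δ : Set Formula | Consistent CS Δ}, IsChain (· ⊆ ·) c →
      c.Nonempty → ∃ ub ∈ {Δ : Set Formula | Consistent CS Δ}, ∀ s ∈ c, s ⊆ ub := by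
    intro c hcS hchain hcne
    refine ⟨⋃₀ c, ?_, fun s hs => Set.subset_sUnion_of_mem hs⟩
    intro hd
    obtain ⟨Γ', hf, hsub, hd'⟩ := hd.finite
    obtain ⟨mm, hmm, hsm⟩ := chain_bound hchain hcne hf hsub
    exact hcS hmm (hd'.mono hsm)
  obtain ⟨m, hΓm, hm⟩ := zorn_subset_nonempty {Δ : Set Formula | Consistent CS Δ} H Γ h
  refine ⟨m, hΓm, hm.1, ?_⟩
  intro F hF hcons
  have hsub : insert F m ⊆ m := hm.2 hcons (Set.subset_insert F m)
  exact hF (hsub (Set.mem_insert F m))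

/-- The canonical model. -/
def canModel (CS : Set Formula) (h0 : Nonempty {w : Set Formula // MCS CS w}) :
    Model where
  World := {w : Set Formula // MCS CS w}
  nonempty := h0
  R := fun w v => ∀ (t : Term) (B : Formula), Formula.just t B ∈ w.1 → B ∈ v.1
  E := fun t A w => Formula.just t A ∈ w.1
  val := fun n w => Formula.atom n ∈ w.1

theorem truth_lemma {h0 : Nonempty {w : Set Formula // MCS CS w}}
    (A : Formula) (w : (canModel CS h0).World) :
    Sat (canModel CS h0) A w ↔ A ∈ w.1 := by
  induction A generalizing w with
  | atom n => exact Iff.rfl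
  | neg A ih =>
      simp only [Sat]
      rw [ih]
      exact w.2.neg_mem_iff.symm
  | impl A B ih1 ih2 =>
      simp only [Sat]
      rw [ih1, ih2]
      constructor
      · intro h
        by_cases hA : A ∈ w.1
        · exact w.2.mem_of_deriv (.mp (.ax (Ax.k B A)) (.prem (h hA)))
        · have hn : A.neg ∈ w.1 := w.2.neg_mem_iff.mpr hA
          exact w.2.mem_of_deriv (.mp (neg_elim A B) (.prem hn))
      · intro h hA
        exact w.2.mem_of_deriv (.mp (.prem h) (.prem hA))
  | just t A ih =>
      simp only [Sat]
      constructor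
      · intro h
        exact h.1
      · intro h
        refine ⟨h, ?_⟩
        intro v hv
        exact (ih v).mpr (hv t A h)

end CompletenessAux2


/-- Completeness of `JD4_CS`: if a formula is not derivable in the Hilbert system
`JD4_CS` (with axiomatically appropriate constant specification `CS`), then it fails at some world
of some Fitting model for `JD4_CS`. -/
theorem completeness_JD4 (CS : Set Formula) (hCS : ConstSpec AxJD4 CS) (hApp : AxApprop AxJD4 CS) (A : Formula)
    (hA : ¬ DerivS AxJD4 CS A) :
    ∃ M : Model, IsModelJD4 CS M ∧ ∃ w : M.World, ¬ Sat M A w := by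
  classical

  -- `{¬A}` is consistent
  have hcons : Consistent CS {A.neg} := by
    intro hd
    apply hA
    have h1 : DerivC CS (insert A.neg ∅) Formula.falsum := hd.mono (by simp)
    have h2 : DerivC CS ∅ (A.neg.impl Formula.falsum) := deduction h1
    have h3 : DerivC CS ∅ (((Formula.atom 0).impl (Formula.atom 0)).impl A) :=
      .mp (.ax (Ax.dn A ((Formula.atom 0).impl (Formula.atom 0)))) h2
    exact (DerivC.mp h3 (taut_id _)).toS
  obtain ⟨w0, hsub0, hw0⟩ := lindenbaum hcons
  have h0 : Nonempty {w : Set Formula // MCS CS w} := ⟨⟨w0, hw0⟩⟩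
  refine ⟨canModel CS h0, ⟨?_, ?_, ?_, ?_, ?_, ?_, ?_⟩, ⟨w0, hw0⟩, ?_⟩
  · -- seriality
    intro w
    have hΓ : Consistent CS {B : Formula | ∃ t : Term, Formula.just t B ∈ w.1} := by
      intro hd
      obtain ⟨t, ht⟩ := lift hApp hd (fun B hB => by
        obtain ⟨s, hs⟩ := hB
        exact ⟨s, .prem hs⟩)
      exact w.2.1 (.mp (.ax (Ax.jd t rfl)) ht)
    obtain ⟨v, hsv, hv⟩ := lindenbaum hΓ
    exact ⟨⟨v, hv⟩, fun t B hB => hsv ⟨t, hB⟩⟩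
  · -- transitivity
    intro w v u hwv hvu t B hB
    have h1 : Formula.just (Term.bang t) (Formula.just t B) ∈ w.1 :=
      w.2.mem_of_deriv (.mp (.ax (Ax.j4 t B rfl)) (.prem hB))
    exact hvu t B (hwv (Term.bang t) (Formula.just t B) h1)
  · -- sum
    rintro s t B w (h | h)
    · exact w.2.mem_of_deriv (.mp (.ax (Ax.a3 s t B)) (or_intro_left _ (.prem h)))
    · exact w.2.mem_of_deriv (.mp (.ax (Ax.a3 s t B)) (or_intro_right _ (.prem h)))
  · -- application
    intro s t B C w h1 h2
    exact w.2.mem_of_deriv (.mp (.mp (.ax (Ax.a2 s t B C)) (.prem h1)) (.prem h2))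
  · -- constant specification
    intro c B w hc
    exact w.2.mem_of_deriv (.an c B hc)
  · -- bang
    intro t B w h
    exact w.2.mem_of_deriv (.mp (.ax (Ax.j4 t B rfl)) (.prem h))
  · -- monotonicity
    intro t B w v h hR
    have h1 : Formula.just (Term.bang t) (Formula.just t B) ∈ w.1 :=
      w.2.mem_of_deriv (.mp (.ax (Ax.j4 t B rfl)) (.prem h))
    exact hR (Term.bang t) (Formula.just t B) h1
  · -- `A` fails at `w0`
    intro hSat
    have hmem : A ∈ w0 := (truth_lemma A ⟨w0, hw0⟩).mp hSat
    exact (hw0.neg_mem_iff.mp (hsub0 rfl)) hmem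

end JustificationLogic
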